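/- Let f, g, h ∈ A with f, g homogeneous. Then the odd Jacobi bracket satisfies the generalised Leibniz rule [f, gh]_J = [f,g]_J h + (-1)^{(|f|+1)|g|} g [f,h]_J - [f, 1]_J g h, where 1 is the unit of A. (Part 3 of the theorem that the odd Jacobi bracket defines an odd Jacobi algebra on C^∞(M); the anomaly to the strict Leibniz rule is precisely [f,1]_J.) -/
import Mathlib


noncomputable section

/-- The sign `(-1)^i` for a parity `i : ZMod 2`. -/
def zsign (i : ZMod 2) : ℝ := if i = 0 then 1 else -1

/-- A Poisson superalgebra: a unital associative `ℝ`-algebra `P` with a `ℤ/2`-grading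
`P = P₀ ⊕ P₁` which is graded-commutative, equipped with an `ℝ`-bilinear, parity-preserving
bracket satisfying graded antisymmetry, the graded Leibniz rule and the graded Jacobi
identity (for homogeneous elements). -/
structure PoissonSuperalgebra (P : Type*) [Ring P] [Algebra ℝ P] where
  grade : ZMod 2 → Submodule ℝ P
  sup_grade : grade 0 ⊔ grade 1 = ⊤
  inf_grade : grade 0 ⊓ grade 1 = ⊥
  one_mem : (1 : P) ∈ grade 0
  mul_mem : ∀ {i j : ZMod 2} {a b : P}, a ∈ grade i → b ∈ grade j → a * b ∈ grade (i + j)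
  super_comm : ∀ {i j : ZMod 2} {a b : P}, a ∈ grade i → b ∈ grade j →
    a * b = zsign (i * j) • (b * a)
  bracket : P →ₗ[ℝ] P →ₗ[ℝ] P
  bracket_mem : ∀ {i j : ZMod 2} {a b : P}, a ∈ grade i → b ∈ grade j →
    bracket a b ∈ grade (i + j)
  bracket_antisymm : ∀ {i j : ZMod 2} {a b : P}, a ∈ grade i → b ∈ grade j →
    bracket a b = -(zsign (i * j) • bracket b a)
  bracket_leibniz : ∀ {i j k : ZMod 2} {a b c : P}, a ∈ grade i → b ∈ grade j →
    c ∈ grade k → bracket a (b * c) = bracket a b * c + zsign (i * j) • (b * bracket a c)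
  bracket_jacobi : ∀ {i j k : ZMod 2} {a b c : P}, a ∈ grade i → b ∈ grade j →
    c ∈ grade k →
    bracket a (bracket b c) = bracket (bracket a b) c + zsign (i * j) • bracket b (bracket a c)

variable {P : Type*} [Ring P] [Algebra ℝ P]

/-- The odd Jacobi bracket `[f,g]_J` associated to an odd Jacobi structure `(S, Q)`,
for `f` homogeneous of parity `i`:
`[f,g]_J = (-1)^{|f|+1} {{S,f},g} - (-1)^{|f|+1} {Q, f g}`. -/
def oddJacobiBracket (psa : PoissonSuperalgebra P) (S Q : P) (i : ZMod 2) (f g : P) : P :=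
  zsign (i + 1) • psa.bracket (psa.bracket S f) g - zsign (i + 1) • psa.bracket Q (f * g)

/-- The Hamiltonian vector field of a homogeneous `f` of parity `i`, acting on `g`:
`X_f(g) = (-1)^{|f|} [f,g]_J - {Q,f}·g`. -/
def hamiltonianVF (psa : PoissonSuperalgebra P) (S Q : P) (i : ZMod 2) (f g : P) : P :=
  zsign i • oddJacobiBracket psa S Q i f g - psa.bracket Q f * g


lemma zmod2_cases (a : ZMod 2) : a = 0 ∨ a = 1 := by revert a; decide

lemma bracket_one_aux (psa : PoissonSuperalgebra P) {i : ZMod 2} {a : P}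
    (ha : a ∈ psa.grade i) : psa.bracket a 1 = 0 := by
  have h := psa.bracket_leibniz ha psa.one_mem psa.one_mem
  have h2 : psa.bracket a 1 = psa.bracket a 1 + psa.bracket a 1 := by
    simpa [zsign] using h
  exact left_eq_add.mp h2

lemma oJB_add_right (psa : PoissonSuperalgebra P) (S Q : P) (i : ZMod 2) (f a b : P) :
    oddJacobiBracket psa S Q i f (a + b)
      = oddJacobiBracket psa S Q i f a + oddJacobiBracket psa S Q i f b := by
  simp only [oddJacobiBracket, mul_add, map_add, smul_add]
  abel

lemma oJB_leibniz_key (psa : PoissonSuperalgebra P) (S Q : P) {i j k : ZMod 2} {f g h : P}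
    (hS : S ∈ psa.grade 1) (hQ : Q ∈ psa.grade 1)
    (hfi : f ∈ psa.grade i) (hgj : g ∈ psa.grade j) (hhk : h ∈ psa.grade k) :
    oddJacobiBracket psa S Q i f (g * h)
      = oddJacobiBracket psa S Q i f g * h
        + zsign ((i + 1) * j) • (g * oddJacobiBracket psa S Q i f h)
        - oddJacobiBracket psa S Q i f 1 * (g * h) := by
  have hSf : psa.bracket S f ∈ psa.grade (1 + i) := psa.bracket_mem hS hfi
  have hQf : psa.bracket Q f ∈ psa.grade (1 + i) := psa.bracket_mem hQ hfi
  have e1 := psa.bracket_leibniz hSf hgj hhk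
  have e2 := psa.bracket_leibniz hQ hfi (psa.mul_mem hgj hhk)
  have e3 := psa.bracket_leibniz hQ hgj hhk
  have e4 := psa.bracket_leibniz hQ hfi hgj
  have e5 := psa.bracket_leibniz hQ hfi hhk
  have e6 : psa.bracket (psa.bracket S f) 1 = 0 := bracket_one_aux psa hSf
  have c1 : g * (psa.bracket Q f * h)
      = zsign (j * (1 + i)) • (psa.bracket Q f * (g * h)) := by
    rw [← mul_assoc, psa.super_comm hgj hQf, smul_mul_assoc, mul_assoc]
  have c2 : g * (f * psa.bracket Q h)
      = zsign (j * i) • (f * (g * psa.bracket Q h)) := by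
    rw [← mul_assoc, psa.super_comm hgj hfi, smul_mul_assoc, mul_assoc]
  simp only [oddJacobiBracket, e1, e2, e3, e4, e5, e6, mul_one, smul_zero, zero_sub,
    smul_add, smul_sub, smul_smul, sub_mul, add_mul, smul_mul_assoc, mul_add, mul_sub,
    mul_smul_comm, mul_assoc, neg_mul, neg_smul, c1, c2]
  rcases zmod2_cases i with rfl | rfl <;> rcases zmod2_cases j with rfl | rfl <;>
    simp (config := { decide := true }) only [zsign, if_true, if_false, reduceIte] <;>
    norm_num <;> module

/-- Part 3 of Theorem 2.1: the generalised Leibniz rule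
`[f, gh]_J = [f,g]_J h + (-1)^{(|f|+1)|g|} g [f,h]_J - [f,1]_J g h`. -/
theorem oddJacobiBracket_leibniz
    (psa : PoissonSuperalgebra P) (A : Subalgebra ℝ P) (S Q : P)
    (hA_graded : ∀ a ∈ A, ∃ a₀ a₁ : P, a₀ ∈ A ∧ a₀ ∈ psa.grade 0 ∧
      a₁ ∈ A ∧ a₁ ∈ psa.grade 1 ∧ a = a₀ + a₁)
    (hA_bracket : ∀ f ∈ A, ∀ g ∈ A, psa.bracket f g = 0)
    (hS : S ∈ psa.grade 1) (hQ : Q ∈ psa.grade 1)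
    (hQQ : psa.bracket Q Q = 0) (hQS : psa.bracket Q S = 0)
    (hSS : psa.bracket S S = -((2 : ℝ) • (Q * S)))
    (hQA : ∀ f ∈ A, psa.bracket Q f ∈ A)
    (hSA : ∀ f ∈ A, ∀ g ∈ A, psa.bracket (psa.bracket S f) g ∈ A)
    {i j : ZMod 2} {f g h : P} (hf : f ∈ A) (hfi : f ∈ psa.grade i)
    (hg : g ∈ A) (hgj : g ∈ psa.grade j) (hh : h ∈ A) :
    oddJacobiBracket psa S Q i f (g * h)
      = oddJacobiBracket psa S Q i f g * h
        + zsign ((i + 1) * j) • (g * oddJacobiBracket psa S Q i f h)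
        - oddJacobiBracket psa S Q i f 1 * (g * h) := by
  obtain ⟨h₀, h₁, -, hh0, -, hh1, rfl⟩ := hA_graded h hh
  rw [mul_add, oJB_add_right, oJB_leibniz_key psa S Q hS hQ hfi hgj hh0,
    oJB_leibniz_key psa S Q hS hQ hfi hgj hh1, oJB_add_right psa S Q i f h₀ h₁]
  simp only [mul_add, smul_add, add_mul]
  abel
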